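/- arXiv:2409.19349 — 2 statements merged into one kernel-verified Lean document; each statement's English description precedes it below -/
import Mathlib

section
/- Let D = diag(d₁,…,dₙ) be a real diagonal matrix whose entries are nonzero with pairwise distinct absolute values (dᵢ ≠ 0, |dᵢ| ≠ |dⱼ| for i ≠ j). If g₁, g₂ ∈ U(n) satisfy g₁·D·g₂⁻¹ = -D, then g₁ is diagonal and g₂ = -g₁. -/
/-- If `D` is real diagonal with nonzero entries of pairwise distinct absolute
values and `g₁ D g₂⁻¹ = -D` with `g₁, g₂` unitary, then `g₁` is diagonal and
`g₂ = -g₁`. -/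
theorem stmt_10 (n : ℕ) (d : Fin n → ℝ) (hd0 : ∀ i, d i ≠ 0)
    (hdist : ∀ i j, i ≠ j → |d i| ≠ |d j|)
    (g₁ g₂ : Matrix (Fin n) (Fin n) ℂ)
    (hg₁ : g₁ ∈ Matrix.unitaryGroup (Fin n) ℂ)
    (hg₂ : g₂ ∈ Matrix.unitaryGroup (Fin n) ℂ)
    (h : g₁ * Matrix.diagonal (fun i => (d i : ℂ)) * g₂⁻¹ =
      -Matrix.diagonal (fun i => (d i : ℂ))) :
    (∃ w : Fin n → ℂ, g₁ = Matrix.diagonal w) ∧ g₂ = -g₁ := by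
  set D : Matrix (Fin n) (Fin n) ℂ := Matrix.diagonal (fun i => (d i : ℂ)) with hDdef
  have hg₂r : g₂ * star g₂ = 1 := Matrix.mem_unitaryGroup_iff.mp hg₂
  have hg₂l : star g₂ * g₂ = 1 := Matrix.mem_unitaryGroup_iff'.mp hg₂
  have hg₁l : star g₁ * g₁ = 1 := Matrix.mem_unitaryGroup_iff'.mp hg₁
  have hg₂inv : g₂⁻¹ = star g₂ := Matrix.inv_eq_right_inv hg₂r
  rw [hg₂inv] at h
  -- g₁ D = -(D g₂)
  have h1 : g₁ * D = -(D * g₂) := by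
    have t := congrArg (· * g₂) h
    rw [mul_assoc, mul_assoc, hg₂l, mul_one, neg_mul] at t
    exact t
  -- star D = D
  have hDstar : star D = D := by
    ext i j
    rw [Matrix.star_apply, hDdef]
    by_cases hij : i = j
    · subst hij; simp [Matrix.diagonal_apply_eq, Complex.conj_ofReal]
    · rw [Matrix.diagonal_apply_ne' _ hij, Matrix.diagonal_apply_ne _ hij]; simp
  -- g₁ commutes with D * D
  have hcomm : g₁ * (D * D) = (D * D) * g₁ := by
    have e1 : (g₁ * D) * star (g₁ * D) = (-(D * g₂)) * star (-(D * g₂)) := by rw [h1]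
    rw [Matrix.star_mul, star_neg, Matrix.star_mul, neg_mul,
      mul_neg, neg_neg, hDstar] at e1
    have e2 : g₁ * (D * D) * star g₁ = D * D := by
      calc g₁ * (D * D) * star g₁ = g₁ * D * (D * star g₁) := by
            simp only [mul_assoc]
        _ = D * g₂ * (star g₂ * D) := e1
        _ = D * (g₂ * star g₂) * D := by simp only [mul_assoc]
        _ = D * D := by rw [hg₂r, mul_one]
    calc g₁ * (D * D) = g₁ * (D * D) * (star g₁ * g₁) := by rw [hg₁l, mul_one]
      _ = (g₁ * (D * D) * star g₁) * g₁ := by simp only [mul_assoc]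
      _ = (D * D) * g₁ := by rw [e2]
  -- off-diagonal entries of g₁ vanish
  have hoff : ∀ i j, i ≠ j → g₁ i j = 0 := by
    intro i j hij
    have hentry := congrFun (congrFun hcomm i) j
    rw [hDdef] at hentry
    rw [Matrix.diagonal_mul_diagonal] at hentry
    rw [Matrix.mul_apply, Matrix.mul_apply] at hentry
    simp [Matrix.diagonal_apply, Finset.sum_ite_eq, Finset.sum_ite_eq'] at hentry
    have hne : ((d j : ℂ)) * (d j) ≠ (d i) * (d i) := by
      intro hc
      apply hdist i j hij
      have hr : (d j * d j : ℝ) = d i * d i := by exact_mod_cast hc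
      nlinarith [abs_mul_abs_self (d i), abs_mul_abs_self (d j), abs_nonneg (d i),
        abs_nonneg (d j)]
    have hz : g₁ i j * ((d j : ℂ) * d j - (d i) * d i) = 0 := by
      linear_combination hentry
    rcases mul_eq_zero.mp hz with h' | h'
    · exact h'
    · exact absurd (sub_eq_zero.mp h') hne
  have hg1diag : g₁ = Matrix.diagonal (fun i => g₁ i i) := by
    ext i j
    by_cases hij : i = j
    · subst hij; simp [Matrix.diagonal_apply]
    · rw [Matrix.diagonal_apply_ne _ hij]; exact hoff i j hij
  refine ⟨⟨fun i => g₁ i i, hg1diag⟩, ?_⟩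
  ext i j
  have hentry := congrFun (congrFun h1 i) j
  rw [hDdef] at hentry
  rw [Matrix.mul_diagonal] at hentry
  have hentry' : g₁ i j * (d j : ℂ) = -((d i : ℂ) * g₂ i j) := by
    simpa [Matrix.diagonal_mul] using hentry
  have hdi : (d i : ℂ) ≠ 0 := by exact_mod_cast hd0 i
  by_cases hij : i = j
  · subst hij
    have : (d i : ℂ) * g₂ i i = (d i : ℂ) * (-g₁ i i) := by linear_combination hentry'
    simpa using mul_left_cancel₀ hdi this
  · have h0 : g₁ i j = 0 := hoff i j hij
    have : (d i : ℂ) * g₂ i j = (d i : ℂ) * 0 := by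
      rw [h0] at hentry'; linear_combination hentry'
    have := mul_left_cancel₀ hdi this
    simp [this, h0]
end

section
/- Let Q = diag(q₁,…,qₙ) with q₁ > q₂ > … > qₙ > 0 real, let Y be a Hermitian n×n matrix, ζ ∈ ℂ^{n×ℓ} with every row nonzero, and ω > 0. Set Z = ωQ - iY. Suppose (e^{iτ}, g) ∈ U(1) × U(n) satisfies e^{iτ}·gZg⁻¹ = Z and gζ = ζ, and suppose tr(Z²) ≠ 0. Then e^{iτ} = 1 and gQg⁻¹ = Q, gYg⁻¹ = Y. -/
/-- Key step of Theorem 5.1: with `Q = diag(q)` strictly decreasing positive,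
`Y` Hermitian, all rows of `ζ` nonzero, `Z = ωQ - iY`, `tr(Z²) ≠ 0`, a pair
`(e^{iτ}, g)` fixing `(Z, ζ)` must have `e^{iτ} = 1` and fix `Q` and `Y`. -/
theorem stmt_12 (n ℓ : ℕ) (q : Fin n → ℝ)
    (hq : ∀ j k : Fin n, j < k → q k < q j) (hqpos : ∀ j, 0 < q j)
    (Y : Matrix (Fin n) (Fin n) ℂ) (hY : Y.IsHermitian)
    (ζ : Matrix (Fin n) (Fin ℓ) ℂ) (hζ : ∀ j, (fun α => ζ j α) ≠ 0)
    (ω : ℝ) (hω : 0 < ω)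
    (Q : Matrix (Fin n) (Fin n) ℂ) (hQ : Q = Matrix.diagonal (fun j => (q j : ℂ)))
    (Z : Matrix (Fin n) (Fin n) ℂ) (hZ : Z = (ω : ℂ) • Q - Complex.I • Y)
    (htr : (Z * Z).trace ≠ 0)
    (τ : ℝ) (g : Matrix (Fin n) (Fin n) ℂ)
    (hg : g ∈ Matrix.unitaryGroup (Fin n) ℂ)
    (hfix : Complex.exp ((τ : ℂ) * Complex.I) • (g * Z * g⁻¹) = Z)
    (hζfix : g * ζ = ζ) :
    Complex.exp ((τ : ℂ) * Complex.I) = 1 ∧ g * Q * g⁻¹ = Q ∧ g * Y * g⁻¹ = Y := by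
  -- n = 0 is impossible since the trace would vanish
  rcases Nat.eq_zero_or_pos n with hn0 | hn
  · exfalso; apply htr; subst hn0; simp [Matrix.trace]
  haveI : Nonempty (Fin n) := Fin.pos_iff_nonempty.mp hn
  set e : ℂ := Complex.exp ((τ : ℂ) * Complex.I) with he
  -- unitarity facts
  obtain ⟨h1, h2⟩ := (Unitary.mem_iff).mp hg
  have hinv : g⁻¹ = star g := Matrix.inv_eq_right_inv h2
  have hgl : g⁻¹ * g = 1 := by rw [hinv]; exact h1
  have hgr : g * g⁻¹ = 1 := by rw [hinv]; exact h2
  have hgl' : ∀ M : Matrix (Fin n) (Fin n) ℂ, g⁻¹ * (g * M) = M := fun M => by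
    rw [← mul_assoc, hgl, one_mul]
  -- conjugation commutes with conjTranspose and preserves trace
  have conjT : ∀ M : Matrix (Fin n) (Fin n) ℂ, (g * M * g⁻¹).conjTranspose = g * M.conjTranspose * g⁻¹ := by
    intro M
    rw [hinv, Matrix.star_eq_conjTranspose]
    simp [Matrix.conjTranspose_mul, mul_assoc]
  have trconj : ∀ M : Matrix (Fin n) (Fin n) ℂ, (g * M * g⁻¹).trace = M.trace := by
    intro M
    rw [Matrix.trace_mul_comm, ← mul_assoc, hgl, one_mul]
  -- conjugate transpose of Z
  have hQH : Q.conjTranspose = Q := by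
    rw [hQ, Matrix.diagonal_conjTranspose]
    funext j
    simp [Pi.star_def]
  have hZH : Z.conjTranspose = (ω : ℂ) • Q + Complex.I • Y := by
    rw [hZ]
    rw [Matrix.conjTranspose_sub, Matrix.conjTranspose_smul, Matrix.conjTranspose_smul,
      hQH, hY.eq]
    simp [Complex.star_def, Complex.conj_I, Complex.conj_ofReal]
  have hsum : Z + Z.conjTranspose = (2 * (ω : ℂ)) • Q := by
    rw [hZH, hZ]; module
  have hdiff : Z - Z.conjTranspose = (-(2 * Complex.I)) • Y := by
    rw [hZH, hZ]; module
  -- e ^ 2 = 1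
  have hA : (g * Z * g⁻¹) * (g * Z * g⁻¹) = g * (Z * Z) * g⁻¹ := by
    simp [mul_assoc, hgl']
  have htrid : (Z * Z).trace = e ^ 2 * (Z * Z).trace := by
    conv_lhs => rw [← hfix]
    rw [smul_mul_smul_comm, hA, Matrix.trace_smul, trconj, smul_eq_mul]
    ring
  have he2 : e ^ 2 = 1 := by
    have h0 : (e ^ 2 - 1) * (Z * Z).trace = 0 := by linear_combination -htrid
    rcases mul_eq_zero.mp h0 with h | h
    · exact sub_eq_zero.mp h
    · exact absurd h htr
  have hcases : e = 1 ∨ e = -1 := by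
    have h0 : (e - 1) * (e + 1) = 0 := by linear_combination he2
    rcases mul_eq_zero.mp h0 with h | h
    · exact Or.inl (sub_eq_zero.mp h)
    · exact Or.inr (by linear_combination h)
  -- trace of Q is nonzero
  have hQtr : Q.trace ≠ 0 := by
    rw [hQ, Matrix.trace_diagonal]
    rw [show (∑ j, ((q j : ℂ))) = (((∑ j, q j : ℝ)) : ℂ) by push_cast; ring]
    have : 0 < ∑ j, q j := Finset.sum_pos (fun j _ => hqpos j) Finset.univ_nonempty
    exact_mod_cast ne_of_gt this
  -- rule out e = -1
  have he1 : e = 1 := by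
    rcases hcases with h | h
    · exact h
    · exfalso
      have hZneg : g * Z * g⁻¹ = -Z := by
        have := hfix
        rw [h, neg_smul, one_smul, neg_eq_iff_eq_neg] at this
        exact this
      have hZHneg : g * Z.conjTranspose * g⁻¹ = -Z.conjTranspose := by
        have := congrArg Matrix.conjTranspose hZneg
        rwa [conjT, Matrix.conjTranspose_neg] at this
      have hsumneg : g * ((2 * (ω : ℂ)) • Q) * g⁻¹ = -((2 * (ω : ℂ)) • Q) := by
        rw [← hsum, mul_add, add_mul, hZneg, hZHneg, neg_add]
      have := congrArg Matrix.trace hsumneg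
      rw [Matrix.mul_smul, Matrix.smul_mul, Matrix.trace_smul, trconj,
        Matrix.trace_neg, Matrix.trace_smul] at this
      have h2ω : (2 * (ω : ℂ)) ≠ 0 := by
        simp only [ne_eq, mul_eq_zero, not_or]
        exact ⟨two_ne_zero, by exact_mod_cast ne_of_gt hω⟩
      apply hQtr
      have hωC : (ω : ℂ) ≠ 0 := by exact_mod_cast ne_of_gt hω
      rw [smul_eq_mul] at this
      have h4 : (2 * (2 * (ω : ℂ))) * Q.trace = 0 := by linear_combination this
      exact (mul_eq_zero.mp h4).resolve_left
        (mul_ne_zero two_ne_zero (mul_ne_zero two_ne_zero hωC))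
  -- now e = 1
  have hZfix : g * Z * g⁻¹ = Z := by
    have := hfix; rwa [he1, one_smul] at this
  have hZHfix : g * Z.conjTranspose * g⁻¹ = Z.conjTranspose := by
    have := congrArg Matrix.conjTranspose hZfix
    rwa [conjT] at this
  have hQfix : g * Q * g⁻¹ = Q := by
    have hsumfix : g * ((2 * (ω : ℂ)) • Q) * g⁻¹ = (2 * (ω : ℂ)) • Q := by
      rw [← hsum, mul_add, add_mul, hZfix, hZHfix]
    rw [Matrix.mul_smul, Matrix.smul_mul] at hsumfix
    have h2ω : (2 * (ω : ℂ)) ≠ 0 := by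
      simp only [ne_eq, mul_eq_zero, not_or]
      exact ⟨two_ne_zero, by exact_mod_cast ne_of_gt hω⟩
    exact smul_right_injective _ h2ω hsumfix
  have hYfix : g * Y * g⁻¹ = Y := by
    have hdifffix : g * ((-(2 * Complex.I)) • Y) * g⁻¹ = (-(2 * Complex.I)) • Y := by
      rw [← hdiff, mul_sub, sub_mul, hZfix, hZHfix]
    rw [Matrix.mul_smul, Matrix.smul_mul] at hdifffix
    have h2I : (-(2 * Complex.I)) ≠ 0 := by
      simp [Complex.I_ne_zero]
    exact smul_right_injective _ h2I hdifffix
  exact ⟨he1, hQfix, hYfix⟩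
end
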